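/- arXiv:2108.06984 — 4 statements merged into one kernel-verified Lean document; each statement's English description precedes it below -/
import Mathlib

section
/- Let A = (Σ, Q, δ) be a weakly acyclic automaton, S ⊆ Q a set of states, and u ∈ Σ* a word such that δ(S, u) = S. Then δ(q, u) = q for every q ∈ S; in other words, no word induces a non-trivial permutation of a subset of states of a weakly acyclic automaton. -/
/-- The transition function extended to words: `δ*(q, u)`. -/
def deltaStar {Q A : Type*} (δ : Q → A → Q) (q : Q) (u : List A) : Q :=
  u.foldl δ q

/-- A complete deterministic semi-automaton is weakly acyclic if all simple
cycles are self-loops. -/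
def WeaklyAcyclic {Q A : Type*} (δ : Q → A → Q) : Prop :=
  ∀ (q : Q) (u : List A), u ≠ [] → deltaStar δ q u = q → ∀ x ∈ u, δ q x = q

lemma deltaStar_join_replicate {Q A : Type*} (δ : Q → A → Q) (u : List A) (k : ℕ) (q : Q) :
    deltaStar δ q (List.flatten (List.replicate k u)) = (fun q => deltaStar δ q u)^[k] q := by
  induction k generalizing q with
  | zero => simp [deltaStar]
  | succ n ih =>
    rw [List.replicate_succ, List.flatten_cons, Function.iterate_succ_apply]
    simpa [deltaStar, List.foldl_append] using ih (deltaStar δ q u)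

lemma fix_of_letters {Q A : Type*} (δ : Q → A → Q) (q : Q) (u : List A)
    (h : ∀ x ∈ u, δ q x = q) : deltaStar δ q u = q := by
  induction u with
  | nil => rfl
  | cons a t ih =>
    have ha : δ q a = q := h a (by simp)
    have : deltaStar δ q (a :: t) = deltaStar δ (δ q a) t := rfl
    rw [this, ha]
    exact ih fun x hx => h x (by simp [hx])

/-- In a weakly acyclic automaton, no word induces a non-trivial permutation of
a subset of states: if `δ(S, u) = S` then `u` fixes every state of `S`. -/
theorem no_nontrivial_permutation {Q A : Type*} [Fintype Q] [Nonempty Q]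
    [Fintype A] (δ : Q → A → Q) (hwa : WeaklyAcyclic δ)
    (S : Set Q) (u : List A)
    (hS : (fun q => deltaStar δ q u) '' S = S) :
    ∀ q ∈ S, deltaStar δ q u = q := by
  rcases eq_or_ne u [] with rfl | hu
  · intro q _; rfl
  set f : Q → Q := fun q => deltaStar δ q u with hf
  have hmaps : Set.MapsTo f S S := fun q hq => hS ▸ Set.mem_image_of_mem f hq
  have hsurj : Set.SurjOn f S S := by rw [Set.SurjOn, hS]
  have hbij : Set.BijOn f S S :=
    ((Set.Finite.surjOn_iff_bijOn_of_mapsTo S.toFinite hmaps).mp hsurj)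
  have hinj : Set.InjOn f S := hbij.injOn
  -- iterates stay in S
  have hiter_mem : ∀ (q : Q), q ∈ S → ∀ n, f^[n] q ∈ S := by
    intro q hq n
    induction n with
    | zero => exact hq
    | succ m ih => rw [Function.iterate_succ_apply']; exact hmaps ih
  -- injectivity of iterates on S
  have hiter_inj : ∀ n : ℕ, ∀ a ∈ S, ∀ b ∈ S, f^[n] a = f^[n] b → a = b := by
    intro n
    induction n with
    | zero => intro a _ b _ h; simpa using h
    | succ m ih =>
      intro a ha b hb h
      rw [Function.iterate_succ_apply', Function.iterate_succ_apply'] at h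
      exact ih a ha b hb (hinj (hiter_mem a ha m) (hiter_mem b hb m) h)
  intro q hq
  -- pigeonhole: find i < j with f^[i] q = f^[j] q
  obtain ⟨i, j, hne, heq⟩ := Finite.exists_ne_map_eq_of_infinite (fun n : ℕ => f^[n] q)
  wlog hij : i < j generalizing i j
  · exact this j i hne.symm heq.symm (by omega)
  obtain ⟨k, hk, rfl⟩ : ∃ k, 0 < k ∧ j = i + k := ⟨j - i, by omega, by omega⟩
  have heq' : f^[i] (f^[k] q) = f^[i] q := by
    rw [Function.iterate_add_apply] at heq; exact heq.symm
  have hper : f^[k] q = q := hiter_inj i (f^[k] q) (hiter_mem q hq k) q hq heq'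
  have hword : deltaStar δ q (List.flatten (List.replicate k u)) = q := by
    rw [deltaStar_join_replicate]; exact hper
  have hne' : List.flatten (List.replicate k u) ≠ [] := by
    cases k with
    | zero => omega
    | succ m =>
      simp only [List.replicate_succ, List.flatten_cons, ne_eq, List.append_eq_nil_iff]
      intro h; exact hu h.1
  have hfix := hwa q _ hne' hword
  exact fix_of_letters δ q u fun x hx => hfix x (by
    cases k with
    | zero => omega
    | succ m => simp [List.replicate_succ, List.mem_append, hx])
end

section
/- Let A = (Σ, Q, δ) be a weakly acyclic automaton, let S, T ⊆ Q, and let R be the set of all sink states of A that are reachable from some state of S. Assume R ⊆ S. Then there exists a word w ∈ Σ* with δ(S, w) ⊆ T if and only if R ⊆ T. -/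
section

variable {Q A : Type*} {δ : Q → A → Q}

variable (δ) in
def IsSink (q : Q) : Prop := ∀ x, δ q x = q

variable (δ) in
def reachableFrom (p : Q) : Set Q := {q | ∃ u : List A, deltaStar δ p u = q}

lemma deltaStar_cons (q : Q) (x : A) (u : List A) :
    deltaStar δ q (x :: u) = deltaStar δ (δ q x) u :=
  rfl

lemma deltaStar_append (q : Q) (u v : List A) :
    deltaStar δ q (u ++ v) = deltaStar δ (deltaStar δ q u) v :=
  List.foldl_append

lemma deltaStar_of_isSink {q : Q} (hq : IsSink δ q) (u : List A) : deltaStar δ q u = q := by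
  induction u with
  | nil => rfl
  | cons x u ih => rwa [deltaStar_cons, hq x]

lemma reachableFrom_subset_of_mem {p q : Q} (hq : q ∈ reachableFrom δ p) :
    reachableFrom δ q ⊆ reachableFrom δ p := by
  obtain ⟨u, rfl⟩ := hq
  rintro _ ⟨v, rfl⟩
  exact ⟨u ++ v, deltaStar_append p u v⟩

namespace WeaklyAcyclic

lemma reachableFrom_ssubset (hwa : WeaklyAcyclic δ) {p : Q} {x : A} (hx : δ p x ≠ p) :
    reachableFrom δ (δ p x) ⊂ reachableFrom δ p := by
  refine (reachableFrom_subset_of_mem ⟨[x], rfl⟩).ssubset_of_not_subset fun hsub => hx ?_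
  obtain ⟨u, hu⟩ := hsub (⟨[], rfl⟩ : p ∈ reachableFrom δ p)
  exact hwa p (x :: u) (List.cons_ne_nil x u) hu x List.mem_cons_self

/-- A reachable state with the fewest reachable states is a sink. -/
lemma exists_deltaStar_isSink [Finite Q] (hwa : WeaklyAcyclic δ) (p : Q) :
    ∃ u : List A, IsSink δ (deltaStar δ p u) := by
  obtain ⟨_, ⟨u, rfl⟩, hmin⟩ := (reachableFrom δ p).exists_min_image
    (fun q => (reachableFrom δ q).ncard) (Set.toFinite _) ⟨p, [], rfl⟩
  refine ⟨u, fun x => by_contra fun hx => ?_⟩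
  have hlt := Set.ncard_lt_ncard (hwa.reachableFrom_ssubset hx) (Set.toFinite _)
  have hle := hmin (δ (deltaStar δ p u) x) (reachableFrom_subset_of_mem ⟨u, rfl⟩ ⟨[x], rfl⟩)
  omega

lemma exists_forall_deltaStar_isSink [Finite Q] (hwa : WeaklyAcyclic δ) (s : Finset Q) :
    ∃ w : List A, ∀ p ∈ s, IsSink δ (deltaStar δ p w) := by
  classical
  induction s using Finset.induction_on with
  | empty => exact ⟨[], by simp⟩
  | insert p s _ ih =>
    obtain ⟨w, hw⟩ := ih
    obtain ⟨u, hu⟩ := hwa.exists_deltaStar_isSink (deltaStar δ p w)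
    refine ⟨w ++ u, fun q hq => ?_⟩
    rw [deltaStar_append]
    rcases Finset.mem_insert.1 hq with rfl | hq
    · exact hu
    · rw [deltaStar_of_isSink (hw q hq)]
      exact hw q hq

end WeaklyAcyclic

end

theorem map_into_subset_iff_general {Q A : Type*} [Fintype Q]
    (δ : Q → A → Q) (hwa : WeaklyAcyclic δ) (S T : Set Q) (R : Set Q)
    (hR : R = {q : Q | (∀ x : A, δ q x = q) ∧
                       ∃ p ∈ S, ∃ u : List A, deltaStar δ p u = q})
    (hRS : R ⊆ S) :
    (∃ w : List A, (fun q => deltaStar δ q w) '' S ⊆ T) ↔ R ⊆ T := by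
  subst hR
  constructor
  · rintro ⟨w, hw⟩ r hr
    exact hw ⟨r, hRS hr, deltaStar_of_isSink hr.1 w⟩
  · intro hRT
    obtain ⟨w, hw⟩ := hwa.exists_forall_deltaStar_isSink Finset.univ
    refine ⟨w, ?_⟩
    rintro _ ⟨p, hp, rfl⟩
    exact hRT ⟨hw p (Finset.mem_univ p), p, hp, w, rfl⟩

/-- Let `R` be the set of sink states reachable from some state of `S`, and
assume `R ⊆ S`. Then some word maps `S` into `T` iff `R ⊆ T`. -/
theorem map_into_subset_iff {Q A : Type*} [Fintype Q] [Nonempty Q] [Fintype A]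
    (δ : Q → A → Q) (hwa : WeaklyAcyclic δ) (S T : Set Q) (R : Set Q)
    (hR : R = {q : Q | (∀ x : A, δ q x = q) ∧
                       ∃ p ∈ S, ∃ u : List A, deltaStar δ p u = q})
    (hRS : R ⊆ S) :
    (∃ w : List A, (fun q => deltaStar δ q w) '' S ⊆ T) ↔ R ⊆ T :=
  map_into_subset_iff_general δ hwa S T R hR hRS
end

section
/- Let A = (Σ, Q, δ) be a weakly acyclic automaton with n = |Q| states, and let w_Σ ∈ Σ* be any word containing every letter of Σ exactly once. Then every state in δ(Q, w_Σ^{n−1}) (the image of the state set under the (n−1)-fold repetition of w_Σ) is a sink state of A. -/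
lemma deltaStar_flatten_replicate {Q A : Type*} (δ : Q → A → Q) (w : List A) :
    ∀ (m : ℕ) (q : Q),
      deltaStar δ q (List.replicate m w).flatten = (fun p => deltaStar δ p w)^[m] q := by
  intro m
  induction m with
  | zero => intro q; rfl
  | succ m ih =>
    intro q
    rw [List.replicate_succ, List.flatten_cons, Function.iterate_succ_apply]
    simpa [deltaStar, List.foldl_append] using ih (deltaStar δ q w)

lemma deltaStar_fixed {Q A : Type*} (δ : Q → A → Q) (p : Q)
    (h : ∀ x : A, δ p x = p) : ∀ u : List A, deltaStar δ p u = p := by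
  intro u
  induction u with
  | nil => rfl
  | cons x u ih => simpa [deltaStar, h x] using ih

/-- If `w` contains every letter exactly once, then every state in the image
`δ(Q, w^(n-1))` of the whole state set under the `(n-1)`-fold repetition of `w`
is a sink state, where `n = |Q|`. -/
theorem image_of_repeated_word_is_sink {Q A : Type*} [Fintype Q] [Nonempty Q]
    [Fintype A] (δ : Q → A → Q) (hwa : WeaklyAcyclic δ)
    (w : List A) (hnodup : w.Nodup) (hall : ∀ x : A, x ∈ w) :
    ∀ q ∈ (fun p => deltaStar δ p (List.replicate (Fintype.card Q - 1) w).flatten) ''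
        Set.univ, ∀ x : A, δ q x = q := by
  rcases isEmpty_or_nonempty A with hA | hA
  · intro q _ x; exact (IsEmpty.false x).elim
  have hw : w ≠ [] := by
    obtain ⟨x⟩ := hA
    intro h; simpa [h] using hall x
  set f : Q → Q := fun p => deltaStar δ p w with hf
  set n := Fintype.card Q with hn
  rintro q ⟨p, -, rfl⟩ x
  simp only [deltaStar_flatten_replicate δ w, ← hf]
  -- every fixed point of f is a sink
  have sink_of_fix : ∀ r : Q, f r = r → ∀ y : A, δ r y = r := by
    intro r hr y
    exact hwa r w hw hr y (hall y)
  -- find a fixed point along the orbit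
  have key : ∃ k < n, f (f^[k] p) = f^[k] p := by
    by_contra hcon
    push_neg at hcon
    have hinj : Function.Injective (fun i : Fin (n + 1) => f^[(i : ℕ)] p) := by
      intro i j hij
      by_contra hne
      wlog hlt : (i : ℕ) < (j : ℕ) generalizing i j
      · exact this hij.symm (Ne.symm hne) (by omega)
      set r := f^[(i : ℕ)] p with hr
      have hji : f^[(j : ℕ) - (i : ℕ)] r = r := by
        have : f^[((j : ℕ) - (i : ℕ)) + (i : ℕ)] p = f^[(i : ℕ)] p := by
          rw [Nat.sub_add_cancel hlt.le]; exact hij.symm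
        rwa [Function.iterate_add_apply] at this
      have hrd : deltaStar δ r (List.replicate ((j : ℕ) - (i : ℕ)) w).flatten = r := by
        rw [deltaStar_flatten_replicate]; exact hji
      have hne' : (List.replicate ((j : ℕ) - (i : ℕ)) w).flatten ≠ [] := by
        obtain ⟨m, hm⟩ : ∃ m, (j : ℕ) - (i : ℕ) = m + 1 := ⟨(j : ℕ) - (i : ℕ) - 1, by omega⟩
        rw [hm, List.replicate_succ, List.flatten_cons]
        simp [hw]
      have hfixl : ∀ y ∈ (List.replicate ((j : ℕ) - (i : ℕ)) w).flatten, δ r y = r :=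
        hwa r _ hne' hrd
      have hfixall : ∀ y : A, δ r y = r := by
        intro y
        apply hfixl
        obtain ⟨m, hm⟩ : ∃ m, (j : ℕ) - (i : ℕ) = m + 1 := ⟨(j : ℕ) - (i : ℕ) - 1, by omega⟩
        rw [hm, List.replicate_succ, List.flatten_cons, List.mem_append]
        exact Or.inl (hall y)
      have : f r = r := deltaStar_fixed δ r hfixall w
      exact hcon (i : ℕ) (by omega) this
    have := Fintype.card_le_of_injective _ hinj
    simp [hn] at this
  obtain ⟨k, hk, hfix⟩ := key
  have hsink : ∀ y : A, δ (f^[k] p) y = f^[k] p := sink_of_fix _ hfix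
  have : f^[n - 1] p = f^[k] p := by
    have h1 : n - 1 = (n - 1 - k) + k := by omega
    rw [h1, Function.iterate_add_apply, Function.iterate_fixed hfix]
  rw [this]
  exact hsink x
end

section
/- A deterministic complete semi-automaton A = (Σ, Q, δ) is weakly acyclic if and only if its reachability relation is antisymmetric (hence a partial order): for all states p, q, if q is reachable from p and p is reachable from q, then p = q. -/
/-- A complete deterministic semi-automaton is weakly acyclic iff its
reachability relation is antisymmetric (hence a partial order). -/
theorem weaklyAcyclic_iff_reachability_antisymm {Q A : Type*}
    [Fintype Q] [Nonempty Q] [Fintype A] (δ : Q → A → Q) :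
    WeaklyAcyclic δ ↔
      ∀ p q : Q, (∃ u : List A, deltaStar δ p u = q) →
        (∃ v : List A, deltaStar δ q v = p) → p = q := by
  have happ : ∀ (p : Q) (u v : List A),
      deltaStar δ p (u ++ v) = deltaStar δ (deltaStar δ p u) v := by
    intro p u v; simp [deltaStar, List.foldl_append]
  have hfix : ∀ (p : Q) (u : List A), (∀ x ∈ u, δ p x = p) →
      deltaStar δ p u = p := by
    intro p u h
    induction u with
    | nil => rfl
    | cons a t ih =>
      simp only [deltaStar, List.foldl_cons] at *
      rw [h a (by simp)]
      exact ih fun x hx => h x (by simp [hx])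
  constructor
  · intro hwa p q ⟨u, hu⟩ ⟨v, hv⟩
    by_cases hu0 : u = []
    · subst hu0; exact hu
    have hcyc : deltaStar δ p (u ++ v) = p := by rw [happ, hu, hv]
    have hloops := hwa p (u ++ v) (fun h => hu0 (List.append_eq_nil_iff.mp h).1) hcyc
    have : deltaStar δ p u = p :=
      hfix p u fun x hx => hloops x (by simp [hx])
    rw [← hu, this]
  · intro hanti q u hne hcyc x hx
    obtain ⟨a, b, rfl⟩ := List.append_of_mem hx
    have h1 : deltaStar δ q (a ++ x :: b) = q := hcyc
    set r := deltaStar δ q a with hr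
    have hrq : deltaStar δ r (x :: b) = q := by rw [hr, ← happ]; exact h1
    have hqr : q = r := hanti q r ⟨a, rfl⟩ ⟨x :: b, hrq⟩
    have hsb : deltaStar δ (δ r x) b = q := hrq
    have hqs : q = δ r x := hanti q (δ r x) ⟨a ++ [x], by rw [happ, ← hr]; rfl⟩ ⟨b, hsb⟩
    rw [← hqr] at hqs
    exact hqs.symm
end
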